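/- arXiv:2406.12596 — 3 statements merged into one kernel-verified Lean document; each statement's English description precedes it below -/
import Mathlib

section
/- (Lemma 1, mean) Let M ≥ 1, let π be a uniformly random permutation of {0, 1, …, M−1}, and for p, q ∈ ℝ define the random beam correlation η(p,q) = (1/M)·∑_{m=0}^{M−1} exp(i·2π·(m·p − π(m)·q)). Then E[η(p,q)] = [(1/M)·∑_{m=0}^{M−1} exp(i·2π·m·p)] · [(1/M)·∑_{z=0}^{M−1} exp(−i·2π·z·q)]; in particular, for p, q ∉ ℤ, E[η(p,q)] = Sa_M(p)·Sa_M(q)·exp(i·π·(M−1)·(p − q)) where Sa_M(x) = sin(π·M·x)/(M·sin(π·x)). -/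
/-! For each fixed `m`, `σ m` is uniformly distributed on `{0, …, M-1}`, so by linearity the mean
of `η(p,q)` factors into the normalized geometric sums in `p` and in `-q`. With `y = exp(iπx)`,
`∑_{m<M} y^(2m) = (y^(2M) - 1)/(y² - 1) = y^(M-1) · sin(πMx)/sin(πx)`, which gives the closed
form `M · Sa_M(x) · exp(iπ(M-1)x)` whenever `sin(πx) ≠ 0`. -/

/-- `Sa_M(x) = sin(πMx)/(M sin(πx))`. -/
noncomputable def Sa (M : ℕ) (x : ℝ) : ℝ :=
  Real.sin (Real.pi * (M : ℝ) * x) / ((M : ℝ) * Real.sin (Real.pi * x))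

/-- The random beam correlation of the random-permutation FDA:
`η(p,q) = (1/M)·∑_{m<M} exp(i·2π·(m·p − σ(m)·q))`. -/
noncomputable def eta (M : ℕ) (σ : Equiv.Perm (Fin M)) (p q : ℝ) : ℂ :=
  (M : ℂ)⁻¹ * ∑ m : Fin M,
    Complex.exp (Complex.I * ((2 * Real.pi * (((m : ℕ) : ℝ) * p - ((σ m : ℕ) : ℝ) * q) : ℝ) : ℂ))

open Finset
open Complex hiding eta
open scoped Nat

section RandomPermutation

variable {α R : Type*} [Fintype α] [DecidableEq α]

/-- Composing with the swap `(b a)` shows that `∑ σ, f (σ b)` does not depend on `b`; summing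
over `b` and exchanging the sums gives `(card α)!` copies of `∑ b, f b`. -/
theorem card_mul_sum_perm_apply [CommSemiring R] (f : α → R) (a : α) :
    (Fintype.card α : R) * ∑ σ : Equiv.Perm α, f (σ a) = (Fintype.card α)! * ∑ b, f b := by
  have h_indep : ∀ b, ∑ σ : Equiv.Perm α, f (σ b) = ∑ σ : Equiv.Perm α, f (σ a) := fun b =>
    Fintype.sum_equiv (Equiv.mulRight (Equiv.swap b a)) _ _ fun σ => by simp
  calc (Fintype.card α : R) * ∑ σ : Equiv.Perm α, f (σ a)
      = ∑ b : α, ∑ σ : Equiv.Perm α, f (σ b) := by simp [h_indep]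
    _ = ∑ σ : Equiv.Perm α, ∑ b, f b := by
      rw [Finset.sum_comm]
      exact sum_congr rfl fun σ _ => Equiv.sum_comp σ f
    _ = (Fintype.card α)! * ∑ b, f b := by simp [Fintype.card_perm]

theorem card_mul_sum_perm_sum_mul_apply [CommSemiring R] (g f : α → R) :
    (Fintype.card α : R) * ∑ σ : Equiv.Perm α, ∑ a, g a * f (σ a)
      = (Fintype.card α)! * (∑ a, g a) * ∑ b, f b := by
  rw [Finset.sum_comm, mul_sum, mul_assoc, sum_mul, mul_sum]
  refine sum_congr rfl fun a _ => ?_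
  rw [← mul_sum, mul_left_comm, card_mul_sum_perm_apply]
  ring

theorem inv_factorial_mul_sum_perm_mean [Field R] [CharZero R] (g f : α → R) :
    ((Fintype.card α)! : R)⁻¹ *
        ∑ σ : Equiv.Perm α, (Fintype.card α : R)⁻¹ * ∑ a, g a * f (σ a)
      = ((Fintype.card α : R)⁻¹ * ∑ a, g a) * ((Fintype.card α : R)⁻¹ * ∑ b, f b) := by
  have h := card_mul_sum_perm_sum_mul_apply g f
  have h_fact : ((Fintype.card α)! : R) ≠ 0 :=
    Nat.cast_ne_zero.mpr (Fintype.card α).factorial_ne_zero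
  rcases eq_or_ne (Fintype.card α : R) 0 with h_card | h_card
  · simp [h_card]
  · rw [← mul_sum]
    field_simp
    linear_combination h

end RandomPermutation

theorem ofReal_sin_mul_two_I (a : ℝ) :
    (Real.sin a : ℂ) * (2 * I) = exp (I * a) - (exp (I * a))⁻¹ := by
  rw [ofReal_sin, ← exp_neg, sin, mul_comm I]
  field_simp
  ring_nf
  rw [I_sq]
  ring

theorem sum_range_exp_two_pi_mul (N : ℕ) {x : ℝ} (hx : Real.sin (Real.pi * x) ≠ 0) :
    ∑ m ∈ range N, exp (I * ((2 * Real.pi * (m : ℝ) * x : ℝ) : ℂ))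
      = ((Real.sin (Real.pi * N * x) / Real.sin (Real.pi * x) : ℝ) : ℂ) *
        exp (I * ((Real.pi * ((N : ℝ) - 1) * x : ℝ) : ℂ)) := by
  set y := exp (I * ((Real.pi * x : ℝ) : ℂ))
  have hy : y ≠ 0 := exp_ne_zero _
  have h_pow : ∀ n : ℕ, exp (I * ((Real.pi * n * x : ℝ) : ℂ)) = y ^ n := fun n => by
    rw [← exp_nat_mul]; push_cast; ring_nf
  have h_term : ∀ m : ℕ, exp (I * ((2 * Real.pi * (m : ℝ) * x : ℝ) : ℂ)) = (y ^ 2) ^ m := fun m => by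
    rw [← pow_mul, ← h_pow]; push_cast; ring_nf
  have h_phase : exp (I * ((Real.pi * ((N : ℝ) - 1) * x : ℝ) : ℂ)) = y ^ N * y⁻¹ := by
    rw [← h_pow, ← exp_neg, ← exp_add]; push_cast; ring_nf
  have h_sin : (Real.sin (Real.pi * x) : ℂ) * (2 * I) = y - y⁻¹ := ofReal_sin_mul_two_I _
  have h_sinN : (Real.sin (Real.pi * N * x) : ℂ) * (2 * I) = y ^ N - (y ^ N)⁻¹ := by
    rw [ofReal_sin_mul_two_I, h_pow]
  have h_sin_ne : (Real.sin (Real.pi * x) : ℂ) ≠ 0 := ofReal_ne_zero.mpr hx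
  have hI : (2 * I) ≠ 0 := by simp
  have hy2 : y ^ 2 - 1 ≠ 0 := by
    rw [show y ^ 2 - 1 = y * (y - y⁻¹) by field_simp, ← h_sin]
    exact mul_ne_zero hy (mul_ne_zero h_sin_ne hI)
  rw [sum_congr rfl fun m _ => h_term m, geom_sum_eq (sub_ne_zero.mp hy2), h_phase, ofReal_div,
    eq_div_of_mul_eq hI h_sin, eq_div_of_mul_eq hI h_sinN]
  field_simp
  ring

theorem Sa_neg (M : ℕ) (x : ℝ) : Sa M (-x) = Sa M x := by
  simp only [Sa, mul_neg, Real.sin_neg, neg_div_neg_eq]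

theorem inv_mul_sum_range_exp_two_pi_mul (N : ℕ) {x : ℝ} (hx : ∀ n : ℤ, x ≠ n) :
    (N : ℂ)⁻¹ * ∑ m ∈ range N, exp (I * ((2 * Real.pi * (m : ℝ) * x : ℝ) : ℂ))
      = (Sa N x : ℂ) * exp (I * ((Real.pi * ((N : ℝ) - 1) * x : ℝ) : ℂ)) := by
  have hsin : Real.sin (Real.pi * x) ≠ 0 := by
    rw [Ne, Real.sin_eq_zero_iff]
    rintro ⟨n, hn⟩
    exact hx n (mul_left_cancel₀ Real.pi_ne_zero (by linarith))
  rw [sum_range_exp_two_pi_mul N hsin, Sa]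
  push_cast
  ring

theorem stmt_4_general (M : ℕ) (p q : ℝ) :
    (Nat.factorial M : ℂ)⁻¹ * (∑ σ : Equiv.Perm (Fin M), eta M σ p q)
      = ((M : ℂ)⁻¹ * ∑ m ∈ Finset.range M,
          Complex.exp (Complex.I * ((2 * Real.pi * (m : ℝ) * p : ℝ) : ℂ))) *
        ((M : ℂ)⁻¹ * ∑ z ∈ Finset.range M,
          Complex.exp (-(Complex.I * ((2 * Real.pi * (z : ℝ) * q : ℝ) : ℂ)))) ∧
    ((∀ n : ℤ, p ≠ (n : ℝ)) → (∀ n : ℤ, q ≠ (n : ℝ)) →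
      (Nat.factorial M : ℂ)⁻¹ * (∑ σ : Equiv.Perm (Fin M), eta M σ p q)
        = ((Sa M p * Sa M q : ℝ) : ℂ) *
          Complex.exp (Complex.I * ((Real.pi * ((M : ℝ) - 1) * (p - q) : ℝ) : ℂ))) := by
  have h_summand : ∀ a b : ℕ, exp (I * ((2 * Real.pi * ((a : ℝ) * p - (b : ℝ) * q) : ℝ) : ℂ))
      = exp (I * ((2 * Real.pi * (a : ℝ) * p : ℝ) : ℂ)) *
        exp (-(I * ((2 * Real.pi * (b : ℝ) * q : ℝ) : ℂ))) := fun a b => by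
    rw [← exp_add]
    push_cast
    ring_nf
  have h_mean := inv_factorial_mul_sum_perm_mean (α := Fin M)
    (fun m => exp (I * ((2 * Real.pi * ((m : ℕ) : ℝ) * p : ℝ) : ℂ)))
    (fun z => exp (-(I * ((2 * Real.pi * ((z : ℕ) : ℝ) * q : ℝ) : ℂ))))
  simp only [Fintype.card_fin, Fin.sum_univ_eq_sum_range
    (fun m => exp (I * ((2 * Real.pi * (m : ℝ) * p : ℝ) : ℂ))),
    Fin.sum_univ_eq_sum_range (fun z => exp (-(I * ((2 * Real.pi * (z : ℝ) * q : ℝ) : ℂ))))]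
    at h_mean
  simp only [eta, h_summand]
  refine ⟨h_mean, fun hp hq => ?_⟩
  have hq' : ∀ n : ℤ, -q ≠ n := fun n h => hq (-n) (by push_cast; linarith)
  have h_conj : ∀ z : ℕ, exp (-(I * ((2 * Real.pi * (z : ℝ) * q : ℝ) : ℂ)))
      = exp (I * ((2 * Real.pi * (z : ℝ) * -q : ℝ) : ℂ)) := fun z => by
    push_cast
    ring_nf
  rw [h_mean, sum_congr rfl fun z _ => h_conj z, inv_mul_sum_range_exp_two_pi_mul M hp,
    inv_mul_sum_range_exp_two_pi_mul M hq', Sa_neg, mul_mul_mul_comm, ← exp_add]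
  push_cast
  ring_nf

/-- (Lemma 1, mean) For a uniformly random permutation `σ` of `{0,…,M−1}`,
`E[η(p,q)]` factors as the product of the two normalized geometric sums; in
particular, for non-integer `p, q`,
`E[η(p,q)] = Sa_M(p)·Sa_M(q)·exp(i·π·(M−1)·(p−q))`. -/
theorem stmt_4 (M : ℕ) (hM : 1 ≤ M) (p q : ℝ) :
    (Nat.factorial M : ℂ)⁻¹ * (∑ σ : Equiv.Perm (Fin M), eta M σ p q)
      = ((M : ℂ)⁻¹ * ∑ m ∈ Finset.range M,
          Complex.exp (Complex.I * ((2 * Real.pi * (m : ℝ) * p : ℝ) : ℂ))) *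
        ((M : ℂ)⁻¹ * ∑ z ∈ Finset.range M,
          Complex.exp (-(Complex.I * ((2 * Real.pi * (z : ℝ) * q : ℝ) : ℂ)))) ∧
    ((∀ n : ℤ, p ≠ (n : ℝ)) → (∀ n : ℤ, q ≠ (n : ℝ)) →
      (Nat.factorial M : ℂ)⁻¹ * (∑ σ : Equiv.Perm (Fin M), eta M σ p q)
        = ((Sa M p * Sa M q : ℝ) : ℂ) *
          Complex.exp (Complex.I * ((Real.pi * ((M : ℝ) - 1) * (p - q) : ℝ) : ℂ))) :=
  stmt_4_general M p q
end

section
/- Let M ≥ 2, let π be a uniformly random permutation of {0, 1, …, M−1}, and for p, q ∈ ℝ with p, q ∉ ℤ define η(p,q) = (1/M)·∑_{m=0}^{M−1} exp(i·2π·(m·p − π(m)·q)). Then the second moment satisfies exactly E[|η(p,q)|²] = 1/M + (M/(M−1))·(Sa_M(p)² − 1/M)·(Sa_M(q)² − 1/M), where Sa_M(x) = sin(π·M·x)/(M·sin(π·x)). -/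
open Finset Real ComplexConjugate

theorem Finset.sum_sum_eq_sum_add_sum_sum_erase {α R : Type*} [Fintype α] [DecidableEq α]
    [AddCommMonoid R] (g : α → α → R) :
    ∑ m, ∑ n, g m n = ∑ m, g m m + ∑ m, ∑ n ∈ univ.erase m, g m n := by
  rw [← sum_add_distrib]
  exact sum_congr rfl fun m _ => (add_sum_erase _ _ (mem_univ m)).symm

namespace Equiv.Perm

variable {α R : Type*} [Fintype α] [DecidableEq α]

theorem sum_apply_eq_sum_apply [AddCommMonoid R] (h : α → R) (a b : α) :
    ∑ σ : Perm α, h (σ a) = ∑ σ : Perm α, h (σ b) := by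
  obtain ⟨τ, hτ⟩ := MulAction.exists_smul_eq (Perm α) b a
  subst hτ
  exact Equiv.sum_comp (Equiv.mulRight τ) fun σ => h (σ b)

theorem sum_apply_apply_eq_sum_apply_apply [AddCommMonoid R] (f : α → α → R) {a b c d : α}
    (hab : a ≠ b) (hcd : c ≠ d) :
    ∑ σ : Perm α, f (σ a) (σ b) = ∑ σ : Perm α, f (σ c) (σ d) := by
  obtain ⟨τ, hτc, hτd⟩ :=
    MulAction.is_two_pretransitive_iff.mp (isMultiplyPretransitive α 2) hcd hab
  subst hτc hτd
  exact Equiv.sum_comp (Equiv.mulRight τ) fun σ => f (σ c) (σ d)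

theorem sum_sum_apply [AddCommMonoid R] (h : α → R) :
    ∑ σ : Perm α, ∑ a, h (σ a) = (Fintype.card α).factorial • ∑ a, h a := by
  rw [sum_congr rfl fun σ _ => Equiv.sum_comp σ h, sum_const, card_univ, Fintype.card_perm]

theorem card_mul_sum_apply [Semiring R] (h : α → R) (a : α) :
    (Fintype.card α : R) * ∑ σ : Perm α, h (σ a) = (Fintype.card α).factorial * ∑ b, h b := by
  calc (Fintype.card α : R) * ∑ σ : Perm α, h (σ a) = ∑ b, ∑ σ : Perm α, h (σ b) := by
        rw [sum_congr rfl fun b _ => sum_apply_eq_sum_apply h b a, sum_const, card_univ,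
          nsmul_eq_mul]
    _ = _ := by rw [sum_comm, sum_sum_apply, nsmul_eq_mul]

theorem card_mul_card_sub_one_mul_sum_apply_apply [CommRing R] (f : α → α → R) {a b : α}
    (hab : a ≠ b) :
    (Fintype.card α : R) * (Fintype.card α - 1) * ∑ σ : Perm α, f (σ a) (σ b) =
      (Fintype.card α).factorial * (∑ c, ∑ d, f c d - ∑ c, f c c) := by
  set P := fun c d => ∑ σ : Perm α, f (σ c) (σ d)
  have hrow : ∀ c, ∑ d ∈ univ.erase c, P c d = ((Fintype.card α : R) - 1) * P a b := by
    intro c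
    rw [sum_congr rfl fun d hd =>
        sum_apply_apply_eq_sum_apply_apply f (ne_of_mem_erase hd).symm hab, sum_const,
      card_erase_of_mem (mem_univ c), card_univ, nsmul_eq_mul, Nat.cast_pred (Fintype.card_pos_iff.mpr ⟨a⟩)]
  have htotal : ∑ c, ∑ d, P c d = (Fintype.card α).factorial * ∑ c, ∑ d, f c d := by
    calc ∑ c, ∑ d, P c d = ∑ σ : Perm α, ∑ c, ∑ d, f (σ c) (σ d) := by
          simp only [P]
          rw [sum_congr rfl fun c _ => sum_comm, sum_comm]
      _ = ∑ σ : Perm α, ∑ c, ∑ d, f (σ c) d :=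
          sum_congr rfl fun σ _ => sum_congr rfl fun c _ => Equiv.sum_comp σ (f (σ c))
      _ = _ := by rw [sum_sum_apply (fun c => ∑ d, f c d), nsmul_eq_mul]
  have hdiag : ∑ c, P c c = (Fintype.card α).factorial * ∑ c, f c c := by
    rw [← nsmul_eq_mul, ← sum_sum_apply (fun c => f c c), sum_comm]
  rw [sum_sum_eq_sum_add_sum_sum_erase, hdiag, sum_congr rfl fun c _ => hrow c, sum_const,
    card_univ, nsmul_eq_mul] at htotal
  linear_combination htotal

theorem card_mul_card_sub_one_mul_sum_sum_sum_mul_apply_apply [CommRing R] (g f : α → α → R) :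
    (Fintype.card α : R) * (Fintype.card α - 1) *
        ∑ σ : Perm α, ∑ m, ∑ n, g m n * f (σ m) (σ n) =
      (Fintype.card α).factorial *
        ((Fintype.card α - 1) * (∑ m, g m m) * (∑ a, f a a) +
          (∑ m, ∑ n, g m n - ∑ m, g m m) * (∑ a, ∑ b, f a b - ∑ a, f a a)) := by
  set N : R := (Fintype.card α : R)
  set P := fun m n => ∑ σ : Perm α, f (σ m) (σ n)
  have hswap : ∑ σ : Perm α, ∑ m, ∑ n, g m n * f (σ m) (σ n) = ∑ m, ∑ n, g m n * P m n := by
    simp only [P, mul_sum]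
    rw [sum_comm]
    exact sum_congr rfl fun m _ => sum_comm
  have hdiag : ∀ m, N * P m m = (Fintype.card α).factorial * ∑ a, f a a :=
    card_mul_sum_apply (fun a => f a a)
  have hoff : ∀ m, ∀ n ∈ univ.erase m,
      N * (N - 1) * P m n = (Fintype.card α).factorial * (∑ a, ∑ b, f a b - ∑ a, f a a) :=
    fun m n hn => card_mul_card_sub_one_mul_sum_apply_apply f (ne_of_mem_erase hn).symm
  calc N * (N - 1) * ∑ σ : Perm α, ∑ m, ∑ n, g m n * f (σ m) (σ n)
      = (N - 1) * ∑ m, g m m * (N * P m m) +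
          ∑ m, ∑ n ∈ univ.erase m, g m n * (N * (N - 1) * P m n) := by
        rw [hswap, sum_sum_eq_sum_add_sum_sum_erase, mul_add, mul_sum, mul_sum, mul_sum]
        congr 1
        · exact sum_congr rfl fun m _ => by ring
        · exact sum_congr rfl fun m _ => by rw [mul_sum]; exact sum_congr rfl fun n _ => by ring
    _ = _ := by
        rw [sum_congr rfl fun m _ => congrArg (g m m * ·) (hdiag m),
          sum_congr rfl fun m _ => sum_congr rfl fun n hn => congrArg (g m n * ·) (hoff m n hn)]
        simp only [← sum_mul]
        linear_combination (Fintype.card α).factorial * (∑ a, ∑ b, f a b - ∑ a, f a a) *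
          (sum_sum_eq_sum_add_sum_sum_erase g).symm

theorem card_mul_card_sub_one_mul_sum_norm_sum_mul_conj_sq {𝕜 : Type*} [RCLike 𝕜]
    (u v : α → 𝕜) :
    (Fintype.card α : ℝ) * (Fintype.card α - 1) *
        ∑ σ : Perm α, ‖∑ m, u m * conj (v (σ m))‖ ^ 2 =
      (Fintype.card α).factorial *
        ((Fintype.card α - 1) * (∑ m, ‖u m‖ ^ 2) * (∑ a, ‖v a‖ ^ 2) +
          (‖∑ m, u m‖ ^ 2 - ∑ m, ‖u m‖ ^ 2) * (‖∑ a, v a‖ ^ 2 - ∑ a, ‖v a‖ ^ 2)) := by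
  have hexpand : ∀ σ : Perm α, (∑ m, u m * conj (v (σ m))) * conj (∑ m, u m * conj (v (σ m))) =
      ∑ m, ∑ n, u m * conj (u n) * (conj (v (σ m)) * v (σ n)) := fun σ => by
    rw [map_sum, sum_mul_sum]
    refine sum_congr rfl fun m _ => sum_congr rfl fun n _ => ?_
    rw [map_mul, RCLike.conj_conj]
    ring
  have hu : ∑ m, ∑ n, u m * conj (u n) = (∑ m, u m) * conj (∑ m, u m) := by
    rw [map_sum, sum_mul_sum]
  have hv : ∑ a, ∑ b, conj (v a) * v b = (∑ a, v a) * conj (∑ a, v a) := by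
    rw [mul_comm, map_sum, sum_mul_sum]
  apply RCLike.ofReal_injective (K := 𝕜)
  push_cast
  simp only [← RCLike.mul_conj, hexpand]
  refine (card_mul_card_sub_one_mul_sum_sum_sum_mul_apply_apply
    (fun m n => u m * conj (u n)) (fun a b => conj (v a) * v b)).trans ?_
  simp only [hu, hv, RCLike.conj_mul, RCLike.mul_conj]

end Equiv.Perm

open Complex in
theorem norm_sum_exp_two_pi_mul (M : ℕ) {x : ℝ} (hx : ∀ k : ℤ, x ≠ k) :
    ‖∑ m : Fin M, exp (I * ↑(2 * π * ((m : ℕ) * x)))‖ =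
      |Real.sin (π * M * x) / Real.sin (π * x)| := by
  have hnorm : ∀ t : ℝ, ‖exp (I * ↑(2 * π * t)) - 1‖ = 2 * |Real.sin (π * t)| := fun t => by
    rw [norm_exp_I_mul_ofReal_sub_one, Real.norm_eq_abs, abs_mul, abs_two]
    ring_nf
  have hsin : Real.sin (π * x) ≠ 0 := fun h => by
    obtain ⟨k, hk⟩ := sin_eq_zero_iff.mp h
    exact hx k (mul_left_cancel₀ pi_ne_zero (by linarith))
  set z := exp (I * ↑(2 * π * x))
  have hpow : ∀ n : ℕ, z ^ n = exp (I * ↑(2 * π * (n * x))) := fun n => by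
    rw [← Complex.exp_nat_mul]
    push_cast
    ring_nf
  have hz : z ≠ 1 := fun h => by
    have := hnorm x
    rw [← h, sub_self, norm_zero] at this
    exact hsin (abs_eq_zero.mp (by linarith))
  rw [Fin.sum_univ_eq_sum_range (fun n => exp (I * ↑(2 * π * (n * x)))),
    ← sum_congr rfl fun n _ => hpow n, geom_sum_eq hz, norm_div, hpow, hnorm, hnorm, abs_div,
    ← mul_assoc]
  field_simp

theorem eta_eq_inv_mul_sum_mul_conj (M : ℕ) (σ : Equiv.Perm (Fin M)) (p q : ℝ) :
    eta M σ p q = (M : ℂ)⁻¹ * ∑ m : Fin M, Complex.exp (Complex.I * ↑(2 * π * ((m : ℕ) * p))) *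
      conj (Complex.exp (Complex.I * ↑(2 * π * ((σ m : ℕ) * q)))) := by
  rw [eta]
  congr 1
  refine sum_congr rfl fun m _ => ?_
  rw [← Complex.exp_conj, ← Complex.exp_add]
  congr 1
  simp only [map_mul, Complex.conj_I, Complex.conj_ofReal]
  push_cast
  ring

/-- For a uniformly random permutation of `{0,…,M−1}` (`M ≥ 2`) and non-integer
`p, q`, the second moment of the beam correlation satisfies exactly
`E[|η(p,q)|²] = 1/M + (M/(M−1))·(Sa_M(p)² − 1/M)·(Sa_M(q)² − 1/M)`. -/
theorem stmt_7 (M : ℕ) (hM : 2 ≤ M) (p q : ℝ)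
    (hp : ∀ k : ℤ, p ≠ (k : ℝ)) (hq : ∀ k : ℤ, q ≠ (k : ℝ)) :
    (Nat.factorial M : ℝ)⁻¹ * (∑ σ : Equiv.Perm (Fin M), ‖eta M σ p q‖ ^ 2)
      = 1 / (M : ℝ) +
        ((M : ℝ) / ((M : ℝ) - 1)) * (Sa M p ^ 2 - 1 / (M : ℝ)) * (Sa M q ^ 2 - 1 / (M : ℝ)) := by
  set u : Fin M → ℂ := fun m => Complex.exp (Complex.I * ↑(2 * π * ((m : ℕ) * p)))
  set v : Fin M → ℂ := fun a => Complex.exp (Complex.I * ↑(2 * π * ((a : ℕ) * q)))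
  have hM0 : (M : ℝ) ≠ 0 := by positivity
  have hM1 : (M : ℝ) - 1 ≠ 0 := by
    have : (2 : ℝ) ≤ M := by exact_mod_cast hM
    linarith
  have hSa : ∀ x : ℝ, sin (π * M * x) / sin (π * x) = M * Sa M x := fun x => by
    rw [Sa, mul_div_assoc', mul_div_mul_left _ _ hM0]
  have hu : ∀ m, ‖u m‖ = 1 := fun m => Complex.norm_exp_I_mul_ofReal _
  have hv : ∀ a, ‖v a‖ = 1 := fun a => Complex.norm_exp_I_mul_ofReal _
  have hsu : ‖∑ m, u m‖ = |M * Sa M p| := (norm_sum_exp_two_pi_mul M hp).trans (by rw [hSa])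
  have hsv : ‖∑ a, v a‖ = |M * Sa M q| := (norm_sum_exp_two_pi_mul M hq).trans (by rw [hSa])
  have key := Equiv.Perm.card_mul_card_sub_one_mul_sum_norm_sum_mul_conj_sq u v
  simp only [Fintype.card_fin, hu, hv, hsu, hsv, sq_abs, one_pow, sum_const, card_univ,
    nsmul_eq_mul, mul_one] at key
  simp only [eta_eq_inv_mul_sum_mul_conj, norm_mul, mul_pow, norm_inv, Complex.norm_natCast,
    ← mul_sum]
  rw [eq_div_of_mul_eq (mul_ne_zero hM0 hM1) ((mul_comm _ _).trans key)]
  field_simp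
end

section
/- (Corollary 1, asymptotic orthogonality) For each M ≥ 2 let π_M be a uniformly random permutation of {0, 1, …, M−1} and define η_M(p,q) = (1/M)·∑_{m=0}^{M−1} exp(i·2π·(m·p − π_M(m)·q)). If p ∉ ℤ or q ∉ ℤ, then E[|η_M(p,q)|²] → 0 as M → ∞; that is, the random-permutation FDA steering vectors at two locations differing in angle or in distance (within one distance period) are asymptotically orthogonal in mean square as the number of antennas grows. -/
open Finset
open scoped Nat ComplexConjugate FourierTransform

theorem Finset.sum_sum_mul_ite_eq {ι R : Type*} [Fintype ι] [DecidableEq ι] [CommRing R]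
    (c : ι → ι → R) (u v : R) :
    ∑ i, ∑ j, c i j * (if i = j then u else v) =
      v * ∑ i, ∑ j, c i j + (u - v) * ∑ i, c i i := by
  have hsplit : ∀ i j, c i j * (if i = j then u else v) =
      c i j * v + if i = j then c i j * (u - v) else 0 := by
    intro i j
    split_ifs <;> ring
  simp only [hsplit, sum_add_distrib, sum_ite_eq, mem_univ, if_true, ← sum_mul]
  ring

namespace Equiv.Perm

theorem exists_apply_eq_and_apply_eq {ι : Type*} [Finite ι] {i j i' j' : ι} (h : i ≠ j)
    (h' : i' ≠ j') : ∃ τ : Perm ι, τ i' = i ∧ τ j' = j := by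
  obtain ⟨τ, hτ⟩ := exists_extending_pair ![i', j'] ![i, j]
    (injective_pair_iff_ne.mpr h') (injective_pair_iff_ne.mpr h)
  exact ⟨τ, hτ 0, hτ 1⟩

variable {ι : Type*} [Fintype ι] [DecidableEq ι]

theorem sum_apply_apply_eq_of_ne {R : Type*} [AddCommMonoid R] (f : ι → ι → R) {i j i' j' : ι}
    (h : i ≠ j) (h' : i' ≠ j') :
    ∑ σ : Perm ι, f (σ i) (σ j) = ∑ σ : Perm ι, f (σ i') (σ j') := by
  obtain ⟨τ, hi, hj⟩ := exists_apply_eq_and_apply_eq h h'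
  rw [← Equiv.sum_comp (Equiv.mulRight τ) fun σ : Perm ι => f (σ i') (σ j')]
  simp [Perm.mul_apply, hi, hj]

theorem card_mul_card_sub_one_mul_sum_apply_apply_s8 {R : Type*} [CommRing R] (f : ι → ι → R)
    {i j : ι} (h : i ≠ j) :
    (Fintype.card ι * (Fintype.card ι - 1) : R) * ∑ σ : Perm ι, f (σ i) (σ j) =
      (Fintype.card ι)! * (∑ x, ∑ y, f x y - ∑ x, f x x) := by
  set S := ∑ σ : Perm ι, f (σ i) (σ j)
  have row (x : ι) : ∑ y, ∑ σ : Perm ι, f (σ x) (σ y) - ∑ σ : Perm ι, f (σ x) (σ x) =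
      (Fintype.card ι - 1 : R) * S := by
    rw [← sum_erase_eq_sub (mem_univ x), sum_congr rfl fun y hy =>
      sum_apply_apply_eq_of_ne f (ne_of_mem_erase hy).symm h, sum_const, card_erase_of_mem
      (mem_univ x), card_univ, nsmul_eq_mul, Nat.cast_pred (Fintype.card_pos_iff.mpr ⟨x⟩)]
  have invariant (σ : Perm ι) : ∑ x, ∑ y, f (σ x) (σ y) - ∑ x, f (σ x) (σ x) =
      ∑ x, ∑ y, f x y - ∑ x, f x x := by
    rw [Equiv.sum_comp σ fun x => ∑ y, f x (σ y), Equiv.sum_comp σ fun x => f x x]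
    simp only [Equiv.sum_comp σ (f _)]
  calc (Fintype.card ι * (Fintype.card ι - 1) : R) * S
      = ∑ x, (∑ y, ∑ σ : Perm ι, f (σ x) (σ y) - ∑ σ : Perm ι, f (σ x) (σ x)) := by
        simp only [row, sum_const, card_univ, nsmul_eq_mul, mul_assoc]
    _ = ∑ σ : Perm ι, (∑ x, ∑ y, f (σ x) (σ y) - ∑ x, f (σ x) (σ x)) := by
        simp only [sum_sub_distrib]
        rw [(sum_congr rfl fun _ _ => sum_comm).trans sum_comm, sum_comm (s := univ (α := ι))]
    _ = _ := by
        simp only [invariant, sum_const, card_univ, Fintype.card_perm, nsmul_eq_mul]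

theorem card_mul_card_sub_one_mul_sum_norm_sum_mul_sq (a b : ι → Circle) :
    (Fintype.card ι * (Fintype.card ι - 1) : ℝ) * ∑ σ : Perm ι, ‖∑ i, (a i : ℂ) * b (σ i)‖ ^ 2 =
      (Fintype.card ι)! * ((Fintype.card ι) ^ 2 * (Fintype.card ι - 1) +
        (‖∑ i, (a i : ℂ)‖ ^ 2 - Fintype.card ι) * (‖∑ i, (b i : ℂ)‖ ^ 2 - Fintype.card ι)) := by
  set N := Fintype.card ι with hN
  have hunit (z : Circle) : (z : ℂ) * conj (z : ℂ) = 1 := by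
    rw [Complex.mul_conj', Circle.norm_coe, Complex.ofReal_one, one_pow]
  set T : ι → ι → ℂ := fun i j => ∑ σ : Perm ι, (b (σ i) : ℂ) * conj (b (σ j) : ℂ)
  have hT (i j : ι) : (N * (N - 1) : ℂ) * T i j = if i = j then (N * (N - 1) * N ! : ℂ) else
      N ! * ((∑ i, (b i : ℂ)) * conj (∑ i, (b i : ℂ)) - N) := by
    split_ifs with hij
    · simp [T, hij, hunit, N, Fintype.card_perm, mul_comm]
    · rw [card_mul_card_sub_one_mul_sum_apply_apply_s8 (fun x y => (b x : ℂ) * conj (b y : ℂ)) hij,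
        map_sum, sum_mul_sum]
      simp [hunit, N]
  have expand : ∑ σ : Perm ι, (∑ i, (a i : ℂ) * b (σ i)) * conj (∑ i, (a i : ℂ) * b (σ i)) =
      ∑ i, ∑ j, (a i : ℂ) * conj (a j : ℂ) * T i j := by
    calc _ = ∑ σ : Perm ι, ∑ i, ∑ j,
          (a i : ℂ) * conj (a j : ℂ) * ((b (σ i) : ℂ) * conj (b (σ j) : ℂ)) :=
          sum_congr rfl fun σ _ => by
            rw [map_sum, sum_mul_sum]
            exact sum_congr rfl fun i _ => sum_congr rfl fun j _ => by rw [map_mul]; ring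
      _ = _ := by
          rw [sum_comm]
          simp only [T, mul_sum]
          exact sum_congr rfl fun _ _ => sum_comm
  have key : (N * (N - 1) : ℂ) *
      ∑ σ : Perm ι, (∑ i, (a i : ℂ) * b (σ i)) * conj (∑ i, (a i : ℂ) * b (σ i)) =
      N ! * (N ^ 2 * (N - 1) + ((∑ i, (a i : ℂ)) * conj (∑ i, (a i : ℂ)) - N) *
        ((∑ i, (b i : ℂ)) * conj (∑ i, (b i : ℂ)) - N)) := by
    rw [expand, mul_sum]
    simp only [mul_sum, mul_left_comm _ (_ * _) (T _ _), hT, sum_sum_mul_ite_eq]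
    simp only [← mul_sum, hunit, sum_const, card_univ, ← hN, nsmul_eq_mul, mul_one]
    rw [← sum_mul, ← map_sum]
    ring
  simp only [Complex.mul_conj'] at key
  exact_mod_cast key

end Equiv.Perm

theorem Real.fourierChar_eq_one_iff {x : ℝ} : 𝐞 x = 1 ↔ ∃ n : ℤ, x = n := by
  rw [Real.fourierChar_apply', Circle.exp_eq_one]
  refine exists_congr fun n => ?_
  rw [mul_comm (n : ℝ), mul_right_inj' Real.two_pi_pos.ne']

theorem norm_geom_sum_le_of_norm_le_one {𝕜 : Type*} [NormedField 𝕜] {z : 𝕜} (hz : z ≠ 1)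
    (h1 : ‖z‖ ≤ 1) (n : ℕ) : ‖∑ m ∈ range n, z ^ m‖ ≤ 2 / ‖z - 1‖ := by
  rw [geom_sum_eq hz, norm_div]
  gcongr
  calc ‖z ^ n - 1‖ ≤ ‖z ^ n‖ + ‖(1 : 𝕜)‖ := norm_sub_le _ _
    _ ≤ 1 + 1 := by
        rw [norm_pow, norm_one]
        gcongr
        exact pow_le_one₀ (norm_nonneg z) h1
    _ = 2 := one_add_one_eq_two

noncomputable def expSum (M : ℕ) (x : ℝ) : ℂ := ∑ m ∈ range M, (𝐞 (m * x) : ℂ)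

theorem norm_expSum_le (M : ℕ) (x : ℝ) : ‖expSum M x‖ ≤ M := by
  refine (norm_sum_le _ _).trans ?_
  simp [Circle.norm_coe]

theorem norm_expSum_le_of_forall_ne_intCast {x : ℝ} (hx : ∀ k : ℤ, x ≠ k) (M : ℕ) :
    ‖expSum M x‖ ≤ 2 / ‖(𝐞 x : ℂ) - 1‖ := by
  have hpow (m : ℕ) : (𝐞 (m * x) : ℂ) = (𝐞 x : ℂ) ^ m := by
    rw [← nsmul_eq_mul, AddChar.map_nsmul_eq_pow, Circle.coe_pow]
  rw [expSum, sum_congr rfl fun m _ => hpow m]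
  refine norm_geom_sum_le_of_norm_le_one ?_ (Circle.norm_coe _).le M
  rw [Ne, Circle.coe_eq_one, Real.fourierChar_eq_one_iff]
  exact fun ⟨n, hn⟩ => hx n hn

theorem abs_sq_sub_le {r B M : ℝ} (hr : 0 ≤ r) (hrB : r ≤ B) (hM : 0 ≤ M) :
    |r ^ 2 - M| ≤ B ^ 2 + M := by
  rw [abs_le]
  constructor <;> nlinarith

theorem add_mul_div_cube_mul_sub_one_le {C M : ℝ} (hC : 0 ≤ C) (hM : 2 ≤ M) :
    (C + M) * (M ^ 2 + M) / (M ^ 3 * (M - 1)) ≤ 4 * (C + 1) / M := by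
  have hM0 : 0 < M := by linarith
  calc (C + M) * (M ^ 2 + M) / (M ^ 3 * (M - 1))
      ≤ ((C + 1) * M) * (2 * M ^ 2) / (M ^ 3 * (M / 2)) := by
        gcongr ?_ * ?_ / (_ * ?_) <;> nlinarith
    _ = 4 * (C + 1) / M := by
        field_simp
        ring

theorem eta_eq_inv_mul_sum (M : ℕ) (σ : Equiv.Perm (Fin M)) (p q : ℝ) :
    eta M σ p q = (M : ℂ)⁻¹ * ∑ m : Fin M, (𝐞 (m * p) : ℂ) * 𝐞 ((σ m : ℕ) * -q) := by
  refine congrArg _ (sum_congr rfl fun m _ => ?_)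
  rw [← Circle.coe_mul, ← AddChar.map_add_eq_mul, Real.fourierChar_apply, mul_comm]
  congr 3
  ring

theorem mean_norm_eta_sq (p q : ℝ) {M : ℕ} (hM : 2 ≤ M) :
    (M ! : ℝ)⁻¹ * ∑ σ : Equiv.Perm (Fin M), ‖eta M σ p q‖ ^ 2 =
      1 / M + (‖expSum M p‖ ^ 2 - M) * (‖expSum M (-q)‖ ^ 2 - M) / (M ^ 3 * (M - 1)) := by
  have key := Equiv.Perm.card_mul_card_sub_one_mul_sum_norm_sum_mul_sq
    (fun m : Fin M => 𝐞 (m * p)) (fun k : Fin M => 𝐞 (k * -q))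
  rw [Fintype.card_fin, Fin.sum_univ_eq_sum_range (fun m => (𝐞 (m * p) : ℂ)),
    Fin.sum_univ_eq_sum_range (fun m => (𝐞 (m * -q) : ℂ)), ← expSum, ← expSum] at key
  have hnorm (σ : Equiv.Perm (Fin M)) : ‖eta M σ p q‖ ^ 2 =
      (M ^ 2 : ℝ)⁻¹ * ‖∑ m : Fin M, (𝐞 (m * p) : ℂ) * 𝐞 ((σ m : ℕ) * -q)‖ ^ 2 := by
    rw [eta_eq_inv_mul_sum, norm_mul, mul_pow, norm_inv, Complex.norm_natCast, inv_pow]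
  rw [sum_congr rfl fun σ _ => hnorm σ, ← mul_sum]
  generalize ∑ σ : Equiv.Perm (Fin M), ‖∑ m : Fin M, (𝐞 (m * p) : ℂ) * 𝐞 ((σ m : ℕ) * -q)‖ ^ 2 = S
    at key ⊢
  have hM0 : (M : ℝ) ≠ 0 := by exact_mod_cast (by omega : M ≠ 0)
  have hM1 : (M : ℝ) - 1 ≠ 0 := sub_ne_zero.mpr (by exact_mod_cast (by omega : M ≠ 1))
  have hK : (M * (M - 1) : ℝ) ≠ 0 := mul_ne_zero hM0 hM1
  rw [eq_div_of_mul_eq hK ((mul_comm _ _).trans key)]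
  field_simp

theorem exists_abs_mul_norm_expSum_sq_sub_le {p q : ℝ}
    (h : (∀ k : ℤ, p ≠ k) ∨ (∀ k : ℤ, q ≠ k)) : ∃ C : ℝ, 0 ≤ C ∧ ∀ M : ℕ,
      |(‖expSum M p‖ ^ 2 - M) * (‖expSum M (-q)‖ ^ 2 - M)| ≤ (C + M) * (M ^ 2 + M) := by
  have bound_card (x : ℝ) (M : ℕ) : |‖expSum M x‖ ^ 2 - M| ≤ M ^ 2 + M :=
    abs_sq_sub_le (norm_nonneg _) (norm_expSum_le M x) M.cast_nonneg
  have bound_const {x : ℝ} (hx : ∀ k : ℤ, x ≠ k) (M : ℕ) :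
      |‖expSum M x‖ ^ 2 - M| ≤ (2 / ‖(𝐞 x : ℂ) - 1‖) ^ 2 + M :=
    abs_sq_sub_le (norm_nonneg _) (norm_expSum_le_of_forall_ne_intCast hx M) M.cast_nonneg
  rcases h with hp | hq
  · refine ⟨(2 / ‖(𝐞 p : ℂ) - 1‖) ^ 2, sq_nonneg _, fun M => ?_⟩
    rw [abs_mul]
    exact mul_le_mul (bound_const hp M) (bound_card _ M) (abs_nonneg _) (by positivity)
  · have hq' : ∀ k : ℤ, -q ≠ k := fun k hk => hq (-k) (by push_cast; linarith)
    refine ⟨(2 / ‖(𝐞 (-q) : ℂ) - 1‖) ^ 2, sq_nonneg _, fun M => ?_⟩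
    rw [abs_mul, mul_comm]
    exact mul_le_mul (bound_const hq' M) (bound_card _ M) (abs_nonneg _) (by positivity)

/-- (Corollary 1, asymptotic orthogonality) If `p ∉ ℤ` or `q ∉ ℤ`, then the
mean-square beam correlation `E[|η_M(p,q)|²]` (expectation over a uniformly
random permutation of `{0,…,M−1}`) tends to `0` as the number of antennas
`M → ∞`: random-permutation FDA steering vectors at two locations differing in
angle or in distance (within one distance period) are asymptotically
orthogonal in mean square. -/
theorem stmt_8 (p q : ℝ) (h : (∀ k : ℤ, p ≠ (k : ℝ)) ∨ (∀ k : ℤ, q ≠ (k : ℝ))) :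
    Filter.Tendsto
      (fun M : ℕ =>
        (Nat.factorial M : ℝ)⁻¹ * ∑ σ : Equiv.Perm (Fin M), ‖eta M σ p q‖ ^ 2)
      Filter.atTop (nhds 0) := by
  obtain ⟨C, hC, hbound⟩ := exists_abs_mul_norm_expSum_sq_sub_le h
  refine squeeze_zero' (Filter.Eventually.of_forall fun M => by positivity) ?_
    (tendsto_const_div_atTop_nhds_zero_nat (1 + 4 * (C + 1)))
  filter_upwards [Filter.eventually_ge_atTop 2] with M hM
  have hM' : (2 : ℝ) ≤ M := by exact_mod_cast hM
  rw [mean_norm_eta_sq p q hM]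
  calc _ ≤ 1 / (M : ℝ) + (C + M) * (M ^ 2 + M) / (M ^ 3 * (M - 1)) := by
        gcongr 1 / (M : ℝ) + ?_ / _
        · exact mul_nonneg (by positivity) (by linarith)
        · exact (le_abs_self _).trans (hbound M)
    _ ≤ 1 / (M : ℝ) + 4 * (C + 1) / M :=
        add_le_add_right (add_mul_div_cube_mul_sub_one_le hC hM') _
    _ = (1 + 4 * (C + 1)) / M := by ring
end
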